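/- arXiv:1302.0948 — 3 statements merged into one kernel-verified Lean document; each statement's English description precedes it below -/
import Mathlib

section
/- The Shapley value satisfies the efficiency axiom: for a finite set of players C and characteristic function v with v(∅) = 0, the sum over all players u ∈ C of φ_u(v) equals v(C), where φ_u(v) = Σ_{C' ⊆ C \ {u}} (|C'|! (|C| - |C'| - 1)! / |C|!)·(v(C' ∪ {u}) - v(C')). -/
/-
Write `n = #C` and `c k = k! (n - k - 1)! / n!`, and regroup the double sum `∑ u, ∑ S ⊆ C \ {u}`
by coalitions `T ⊆ C`. The value `v T` is collected with weight `#T · c (#T - 1)` from the players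
`u ∈ T` joining `T \ {u}`, and with weight `-(n - #T) · c #T` from the players outside `T` joining
it. For `∅ ⊊ T ⊊ C` both weights equal `#T! (n - #T)! / n!` and cancel, leaving `v C - v ∅`.
-/

open Finset

noncomputable def shapley {α : Type*} [DecidableEq α]
    (C : Finset α) (v : Finset α → ℝ) (u : α) : ℝ :=
  ∑ C' ∈ (C.erase u).powerset,
    ((C'.card.factorial * (C.card - C'.card - 1).factorial : ℕ) : ℝ) / (C.card.factorial : ℝ)
      * (v (insert u C') - v C')

open scoped Nat

namespace Finset

variable {α M : Type*} [DecidableEq α] [AddCommMonoid M]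

theorem sum_powerset_erase_insert {C : Finset α} {u : α} (hu : u ∈ C) (f : Finset α → M) :
    ∑ S ∈ (C.erase u).powerset, f (insert u S) = ∑ T ∈ C.powerset with u ∈ T, f T := by
  refine sum_nbij' (insert u) (erase · u) ?_ ?_ ?_ ?_ (fun _ _ => rfl) <;>
    simp only [mem_filter, mem_powerset, subset_erase]
  · rintro S ⟨hSC, -⟩
    exact ⟨insert_subset hu hSC, mem_insert_self u S⟩
  · rintro T ⟨hTC, -⟩
    exact ⟨(erase_subset u T).trans hTC, notMem_erase u T⟩
  · rintro S ⟨-, huS⟩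
    exact erase_insert huS
  · rintro T ⟨-, huT⟩
    exact insert_erase huT

theorem sum_sum_powerset_erase_insert (C : Finset α) (f : Finset α → M) :
    ∑ u ∈ C, ∑ S ∈ (C.erase u).powerset, f (insert u S) = ∑ T ∈ C.powerset, #T • f T := by
  rw [sum_congr rfl fun u hu => sum_powerset_erase_insert hu f,
    sum_comm' (t' := C.powerset) (s' := id)]
  · simp_rw [id, sum_const]
  · intro u T
    simp only [mem_filter, mem_powerset, id]
    constructor
    · rintro ⟨-, hT, huT⟩; exact ⟨huT, hT⟩
    · rintro ⟨huT, hT⟩; exact ⟨hT huT, hT, huT⟩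

theorem sum_sum_powerset_erase (C : Finset α) (f : Finset α → M) :
    ∑ u ∈ C, ∑ S ∈ (C.erase u).powerset, f S = ∑ S ∈ C.powerset, #(C \ S) • f S := by
  rw [sum_comm' (t' := C.powerset) (s' := (C \ ·))]
  · simp_rw [sum_const]
  · intro u S
    simp only [mem_powerset, subset_erase, mem_sdiff]
    tauto

end Finset

noncomputable def shapleyWeight (n k : ℕ) : ℝ := ((k ! * (n - k - 1)! : ℕ) : ℝ) / n !

theorem shapley_eq_sum_shapleyWeight {α : Type*} [DecidableEq α] (C : Finset α)
    (v : Finset α → ℝ) (u : α) :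
    shapley C v u = ∑ S ∈ (C.erase u).powerset, shapleyWeight #C #S * (v (insert u S) - v S) :=
  rfl

theorem succ_mul_shapleyWeight (n k : ℕ) :
    (k + 1 : ℝ) * shapleyWeight n k = ((k + 1)! * (n - (k + 1))! : ℕ) / n ! := by
  rw [shapleyWeight, Nat.sub_sub, Nat.factorial_succ]
  push_cast
  ring

theorem sub_mul_shapleyWeight {n k : ℕ} (hk : k < n) :
    ((n - k : ℕ) : ℝ) * shapleyWeight n k = (k ! * (n - k)! : ℕ) / n ! := by
  obtain ⟨m, hm⟩ := Nat.exists_eq_add_one_of_ne_zero (Nat.sub_ne_zero_of_lt hk)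
  rw [shapleyWeight, hm, Nat.add_sub_cancel, Nat.factorial_succ]
  push_cast
  ring

theorem card_mul_shapleyWeight_sub {n k : ℕ} (hk : k ≤ n) :
    k * shapleyWeight n (k - 1) - ((n - k : ℕ) : ℝ) * shapleyWeight n k
      = (if k = n then 1 else 0) - (if k = 0 then 1 else 0) := by
  rcases k with _ | k
  · rcases n.eq_zero_or_pos with rfl | hn
    · simp [shapleyWeight]
    · rw [sub_mul_shapleyWeight hn]
      simp [hn.ne, (Nat.factorial_pos n).ne']
  · rw [Nat.add_sub_cancel, Nat.cast_succ, succ_mul_shapleyWeight]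
    rcases hk.lt_or_eq with hlt | rfl
    · rw [sub_mul_shapleyWeight hlt]
      simp [hlt.ne]
    · simp [(Nat.factorial_pos (k + 1)).ne']

theorem sum_shapley {α : Type*} [DecidableEq α] (C : Finset α) (v : Finset α → ℝ) :
    ∑ u ∈ C, shapley C v u = v C - v ∅ := by
  have hsplit : ∀ u ∈ C, shapley C v u =
      ∑ S ∈ (C.erase u).powerset, shapleyWeight #C (#(insert u S) - 1) * v (insert u S)
        - ∑ S ∈ (C.erase u).powerset, shapleyWeight #C #S * v S := by
    intro u _
    rw [shapley_eq_sum_shapleyWeight, ← sum_sub_distrib]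
    refine sum_congr rfl fun S hS => ?_
    rw [card_insert_of_notMem (notMem_mono (mem_powerset.1 hS) (notMem_erase u C)),
      Nat.add_sub_cancel, mul_sub]
  calc ∑ u ∈ C, shapley C v u
      = ∑ T ∈ C.powerset,
          (#T * shapleyWeight #C (#T - 1) - ((#C - #T : ℕ) : ℝ) * shapleyWeight #C #T) * v T := by
        rw [sum_congr rfl hsplit, sum_sub_distrib,
          sum_sum_powerset_erase_insert C fun T => shapleyWeight #C (#T - 1) * v T,
          sum_sum_powerset_erase, ← sum_sub_distrib]
        refine sum_congr rfl fun T hT => ?_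
        rw [card_sdiff_of_subset (mem_powerset.1 hT), nsmul_eq_mul, nsmul_eq_mul]
        ring
    _ = ∑ T ∈ C.powerset, ((if T = C then 1 else 0) - (if T = ∅ then 1 else 0)) * v T := by
        refine sum_congr rfl fun T hT => ?_
        have hTC := mem_powerset.1 hT
        have hcard : #T = #C ↔ T = C := ⟨fun h => eq_of_subset_of_card_le hTC h.ge, congrArg card⟩
        rw [card_mul_shapleyWeight_sub (card_le_card hTC)]
        simp only [hcard, Finset.card_eq_zero]
    _ = v C - v ∅ := by
        simp [sub_mul, sum_sub_distrib, ite_mul]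

/-- Efficiency axiom: the Shapley values of all players sum to the value of the
grand coalition. -/
theorem shapley_efficiency {α : Type*} [DecidableEq α]
    (C : Finset α) (v : Finset α → ℝ) (h0 : v ∅ = 0) :
    ∑ u ∈ C, shapley C v u = v C := by
  rw [sum_shapley, h0, sub_zero]
end

section
/- Strategy-resistance of the utility ψ_sp: define ψ_sp(σ, t) = Σ_{(s,p)∈σ, s ≤ t-1} min(p, t-s)·(t - (s + min(s+p-1, t-1))/2). Then for any schedule σ, start time s, processing times p₁, p₂ ≥ 1, and time t: ψ_sp(σ ∪ {(s,p₁)}, t) + ψ_sp(σ ∪ {(s+p₁,p₂)}, t) = ψ_sp(σ ∪ {(s,p₁+p₂)}, t) + ψ_sp(σ, t). -/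
/-!
A job `(s, p)` contributes to `ψ_sp(·, t)` the sum of `t - k` over its unit slots `k < t`,
which is `T (t - s) - T (t - (s + p))` for the triangular numbers `T m = m (m + 1) / 2`
(truncated subtraction making both terms vanish past `t`). Splitting `(s, p₁ + p₂)` into
`(s, p₁)` and `(s + p₁, p₂)` therefore only inserts a telescoping pair.
-/

open Multiset

noncomputable def psiSp (σ : Multiset (ℕ × ℕ)) (t : ℕ) : ℝ :=
  ((σ.filter (fun j => j.1 < t)).map (fun j =>
    ((min j.2 (t - j.1) : ℕ) : ℝ) *
      ((t : ℝ) - (((j.1 : ℝ) + ((min (j.1 + j.2 - 1) (t - 1) : ℕ) : ℝ)) / 2)))).sum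

noncomputable def triangular (m : ℕ) : ℝ := m * (m + 1) / 2

lemma triangular_sub_triangular_of_lt {s t : ℕ} (p : ℕ) (h : s < t) :
    triangular (t - s) - triangular (t - (s + p)) =
      ((min p (t - s) : ℕ) : ℝ) *
        ((t : ℝ) - ((s : ℝ) + ((min (s + p - 1) (t - 1) : ℕ) : ℝ)) / 2) := by
  unfold triangular
  rcases Nat.eq_zero_or_pos p with rfl | hp
  · simp
  rcases le_or_gt (s + p) t with hle | hgt
  · rw [min_eq_left (by omega), min_eq_left (by omega)]
    push_cast [Nat.cast_sub hle, Nat.cast_sub h.le, Nat.cast_sub (by omega : 1 ≤ s + p)]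
    ring
  · rw [min_eq_right (by omega), min_eq_right (by omega), Nat.sub_eq_zero_of_le hgt.le]
    push_cast [Nat.cast_sub h.le, Nat.cast_sub (by omega : 1 ≤ t)]
    ring

theorem psiSp_eq_sum_triangular (σ : Multiset (ℕ × ℕ)) (t : ℕ) :
    psiSp σ t = (σ.map fun j => triangular (t - j.1) - triangular (t - (j.1 + j.2))).sum := by
  induction σ using Multiset.induction_on with
  | empty => simp [psiSp]
  | cons j σ ih =>
    rw [map_cons, sum_cons, ← ih, psiSp, psiSp, filter_cons]
    split_ifs with h
    · rw [singleton_add, map_cons, sum_cons, triangular_sub_triangular_of_lt _ h]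
    · simp [triangular, Nat.sub_eq_zero_of_le (not_lt.mp h),
        Nat.sub_eq_zero_of_le (le_add_right (not_lt.mp h))]

theorem psiSp_strategy_resistant_general (σ : Multiset (ℕ × ℕ)) (s p₁ p₂ t : ℕ) :
    psiSp (σ + {(s, p₁)}) t + psiSp (σ + {(s + p₁, p₂)}) t =
      psiSp (σ + {(s, p₁ + p₂)}) t + psiSp σ t := by
  simp only [psiSp_eq_sum_triangular, map_add, sum_add, map_singleton, sum_singleton,
    ← add_assoc]
  ring

/-- Strategy-resistance of psiSp: merging or splitting jobs does not change
the utility. -/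
theorem psiSp_strategy_resistant (σ : Multiset (ℕ × ℕ)) (s p₁ p₂ t : ℕ)
    (hp₁ : 1 ≤ p₁) (hp₂ : 1 ≤ p₂) :
    psiSp (σ + {(s, p₁)}) t + psiSp (σ + {(s + p₁, p₂)}) t =
      psiSp (σ + {(s, p₁ + p₂)}) t + psiSp σ t :=
  psiSp_strategy_resistant_general σ s p₁ p₂ t
end

section
/- For unit-size jobs, the number of jobs completed by any time t is the same for every greedy schedule. Formally: consider m machines and a finite set of unit-size jobs with release times r_j ∈ ℕ. A greedy schedule assigns to each time step t ∈ ℕ a set of jobs to start, such that each job starts at most once, no job starts before its release time, at most m jobs are started at each time step, and at every time step the number of started jobs is min(m, number of released-but-not-yet-started jobs). Then for any two greedy schedules σ₁, σ₂ and any time t, the number of jobs started strictly before t in σ₁ equals the number started strictly before t in σ₂. -/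
open Finset

/-- A greedy schedule for unit-size jobs on `m` machines: `start i` is the time
at which job `i` starts; no job starts before its release time, and at every
time step the number of started jobs is the minimum of `m` and the number of
released-but-not-yet-started jobs. -/
def GreedySchedule {ι : Type*} [Fintype ι] [DecidableEq ι]
    (m : ℕ) (r : ι → ℕ) (start : ι → ℕ) : Prop :=
  (∀ i, r i ≤ start i) ∧
  ∀ t : ℕ, (Finset.univ.filter (fun i => start i = t)).card =
    min m ((Finset.univ.filter (fun i => r i ≤ t ∧ t ≤ start i)).card)

/-!
The number of jobs started before `t + 1` is the number started before `t` plus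
`min m (released by t - started before t)`, because the jobs pending at `t` are exactly the
released ones minus those already started. This recursion involves only `m` and `r`, so every
greedy schedule follows the same progress function `greedyProgress m r`.
-/

section

variable {ι : Type*} [Fintype ι]

def greedyProgress (m : ℕ) (r : ι → ℕ) : ℕ → ℕ
  | 0 => 0
  | t + 1 => greedyProgress m r t + min m (#{i | r i ≤ t} - greedyProgress m r t)

lemma card_filter_lt_succ [DecidableEq ι] (s : ι → ℕ) (t : ℕ) :
    #{i | s i < t + 1} = #{i | s i < t} + #{i | s i = t} := by
  rw [← card_union_of_disjoint (disjoint_filter.2 fun _ _ h => h.ne)]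
  congr 1
  ext i
  simp only [mem_filter, mem_univ, mem_union, true_and]
  omega

lemma card_filter_released_pending [DecidableEq ι] {r s : ι → ℕ} (hrs : ∀ i, r i ≤ s i) (t : ℕ) :
    #{i | r i ≤ t ∧ t ≤ s i} = #{i | r i ≤ t} - #{i | s i < t} := by
  have hsub : univ.filter (fun i => s i < t) ⊆ univ.filter (fun i => r i ≤ t) :=
    monotone_filter_right _ fun i _ h => ((hrs i).trans_lt h).le
  rw [← card_sdiff_of_subset hsub]
  congr 1
  ext i
  simp only [mem_filter, mem_sdiff, mem_univ, true_and, not_lt]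

theorem GreedySchedule.card_filter_lt_eq_greedyProgress [DecidableEq ι] {m : ℕ} {r start : ι → ℕ}
    (h : GreedySchedule m r start) (t : ℕ) : #{i | start i < t} = greedyProgress m r t := by
  induction t with
  | zero => simp [greedyProgress]
  | succ t ih =>
    rw [card_filter_lt_succ, h.2 t, card_filter_released_pending h.1, ih, greedyProgress]

end

theorem greedy_unit_jobs_same_progress_general {ι : Type*} [Fintype ι] [DecidableEq ι]
    (m : ℕ) (r : ι → ℕ) (start₁ start₂ : ι → ℕ)
    (h₁ : GreedySchedule m r start₁) (h₂ : GreedySchedule m r start₂) :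
    ∀ t : ℕ, (Finset.univ.filter (fun i => start₁ i < t)).card =
      (Finset.univ.filter (fun i => start₂ i < t)).card := fun t => by
  rw [h₁.card_filter_lt_eq_greedyProgress, h₂.card_filter_lt_eq_greedyProgress]

/-- For unit-size jobs, the number of jobs completed by any time `t` is the
same for every greedy schedule. -/
theorem greedy_unit_jobs_same_progress {ι : Type*} [Fintype ι] [DecidableEq ι]
    (m : ℕ) (hm : 1 ≤ m) (r : ι → ℕ) (start₁ start₂ : ι → ℕ)
    (h₁ : GreedySchedule m r start₁) (h₂ : GreedySchedule m r start₂) :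
    ∀ t : ℕ, (Finset.univ.filter (fun i => start₁ i < t)).card =
      (Finset.univ.filter (fun i => start₂ i < t)).card :=
  greedy_unit_jobs_same_progress_general m r start₁ start₂ h₁ h₂
end
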